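/- arXiv:1809.02960 — 2 statements merged into one kernel-verified Lean document; each statement's English description precedes it below -/
import Mathlib

section
/- Let G be a simple connected graph on vertex set {1,…,n} such that P_G is reflexive, and let W(G) be the whiskered graph of G, on vertex set {1,…,2n}. Then Λ(P_{W(G)}) = { (λ,λ) + (i/(2n))·𝟙 : λ ∈ Λ(P_G), i ∈ {0,1} }, where (λ,λ) ∈ ℚ^{2n} denotes the concatenation of λ with itself and Λ(P_{W(G)}) is computed with respect to the matrix [L_{W(G)}(n)|𝟙] (the n-th column of L_{W(G)} being deleted). -/
open Matrix Finset

/-- The number of spanning trees of `G`: spanning subgraphs of `G` which are trees. -/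
noncomputable def spanningTreeCount {V : Type*} (G : SimpleGraph V) : ℕ :=
  Nat.card {H : SimpleGraph V // H ≤ G ∧ H.IsTree}

/-- The integer Laplacian matrix of a graph on `Fin m`. -/
noncomputable def lap {m : ℕ} (G : SimpleGraph (Fin m)) : Matrix (Fin m) (Fin m) ℤ :=
  letI : DecidableRel G.Adj := fun _ _ => Classical.dec _
  SimpleGraph.lapMatrix ℤ G

/-- The matrix `[L_G(m) | 𝟙]` : the Laplacian with its last column deleted and a column
of all ones appended. -/
noncomputable def lapAug {m : ℕ} (G : SimpleGraph (Fin m)) : Matrix (Fin m) (Fin m) ℤ :=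
  Matrix.of fun r j => if (j : ℕ) + 1 = m then 1 else lap G r j

/-- The Laplacian matrix with its `i`-th column deleted. -/
noncomputable def lapDel {k : ℕ} (G : SimpleGraph (Fin (k+1))) (i : Fin (k+1)) :
    Matrix (Fin (k+1)) (Fin k) ℤ :=
  (lap G).submatrix id i.succAbove

/-- `Λ(P)` for a simplex whose augmented vertex matrix is `M`: the fractional vectors
`λ` with `0 ≤ λᵢ < 1` such that `λ·M` has integer entries. -/
def Lambda {m : ℕ} (M : Matrix (Fin m) (Fin m) ℤ) : Set (Fin m → ℚ) :=
  {lam | (∀ i, 0 ≤ lam i ∧ lam i < 1) ∧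
    ∀ j, ∃ z : ℤ, (Matrix.vecMul lam (M.map (fun a : ℤ => (a : ℚ)))) j = (z : ℚ)}

/-- The Laplacian simplex `P_G ⊆ ℝ^{m-1}` : the convex hull of the rows of the Laplacian
matrix with its last column deleted. -/
noncomputable def PG {m : ℕ} (G : SimpleGraph (Fin m)) : Set (Fin (m-1) → ℝ) :=
  convexHull ℝ (Set.range fun r : Fin m => fun j : Fin (m-1) =>
    (lap G r ⟨(j : ℕ), by have := j.isLt; omega⟩ : ℝ))

/-- A polytope `P` (with `0` in its interior) is reflexive if its dual
`{x | x·y ≤ 1 ∀ y ∈ P}` is a lattice polytope, i.e. the convex hull of finitely many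
integer points. -/
def IsReflexive {d : ℕ} (P : Set (Fin d → ℝ)) : Prop :=
  (0 : Fin d → ℝ) ∈ interior P ∧
  ∃ S : Finset (Fin d → ℝ), (∀ v ∈ S, ∀ i, ∃ z : ℤ, v i = (z : ℝ)) ∧
    {x : Fin d → ℝ | ∀ y ∈ P, ∑ i, x i * y i ≤ 1} = convexHull ℝ (S : Set (Fin d → ℝ))

/-- The linear code over `ℤ/m` associated to a (reflexive) Laplacian simplex:
`C(P_G) = { x mod m : x/m ∈ Λ(P_G) }`. -/
def code {m : ℕ} (G : SimpleGraph (Fin m)) : Set (Fin m → ZMod m) :=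
  {c | ∃ x : Fin m → ℤ, (∀ i, (x i : ZMod m) = c i) ∧
    (fun i => (x i : ℚ) / (m : ℚ)) ∈ Lambda (lapAug G)}

/-- `[L_G(i) | 𝟙]` : the Laplacian with its `i`-th column deleted (remaining columns in
order) and a column of all ones appended. -/
noncomputable def lapAugAt {m : ℕ} (G : SimpleGraph (Fin m)) (i : Fin m) :
    Matrix (Fin m) (Fin m) ℤ :=
  Matrix.of fun r j =>
    if h : (j : ℕ) + 1 = m then 1
    else lap G r (if (j : ℕ) < (i : ℕ) then j
      else ⟨(j : ℕ) + 1, by have := j.isLt; omega⟩)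

/-- The whiskered graph `W(G)` on `{1,…,2m}`: `G` on the first `m` vertices together with
the whisker edges `{i, i+m}`. -/
def whisker {m : ℕ} (G : SimpleGraph (Fin m)) : SimpleGraph (Fin (m + m)) :=
  SimpleGraph.fromRel fun u v =>
    (∃ (hu : (u : ℕ) < m) (hv : (v : ℕ) < m), G.Adj ⟨(u : ℕ), hu⟩ ⟨(v : ℕ), hv⟩) ∨
    ((u : ℕ) < m ∧ (v : ℕ) = (u : ℕ) + m)


-- ===== auxiliary lemmas =====

section Aux
attribute [local instance] Classical.propDecidable

lemma lap_apply {M : ℕ} (H : SimpleGraph (Fin M)) (i j : Fin M) :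
    lap H i j = (if i = j then ∑ v, (if H.Adj i v then (1:ℤ) else 0) else 0)
      - (if H.Adj i j then 1 else 0) := by
  show SimpleGraph.lapMatrix ℤ H i j = _
  rw [SimpleGraph.lapMatrix]
  simp only [Matrix.sub_apply, SimpleGraph.degMatrix, Matrix.diagonal_apply,
    SimpleGraph.adjMatrix_apply, SimpleGraph.degree_eq_sum_if_adj]

lemma lap_apply_q {M : ℕ} (H : SimpleGraph (Fin M)) (i j : Fin M) :
    ((lap H i j : ℤ) : ℚ) = (if i = j then ∑ v, (if H.Adj i v then (1:ℚ) else 0) else 0)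
      - (if H.Adj i j then 1 else 0) := by
  rw [lap_apply]
  push_cast [apply_ite (Int.cast : ℤ → ℚ)]
  simp

lemma whisker_adj {m : ℕ} (G : SimpleGraph (Fin m)) (u v : Fin (m+m)) :
    (whisker G).Adj u v ↔
      (∃ (hu : (u:ℕ) < m) (hv : (v:ℕ) < m), G.Adj ⟨(u:ℕ),hu⟩ ⟨(v:ℕ),hv⟩) ∨
      ((u:ℕ) < m ∧ (v:ℕ) = (u:ℕ) + m) ∨ ((v:ℕ) < m ∧ (u:ℕ) = (v:ℕ) + m) := by
  rw [whisker, SimpleGraph.fromRel_adj]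
  constructor
  · rintro ⟨hne, (⟨hu,hv,h⟩|h) | (⟨hv,hu,h⟩|h)⟩
    · exact Or.inl ⟨hu, hv, h⟩
    · exact Or.inr (Or.inl h)
    · exact Or.inl ⟨hu, hv, h.symm⟩
    · exact Or.inr (Or.inr h)
  · rintro (⟨hu,hv,h⟩ | ⟨hu,he⟩ | ⟨hv,he⟩)
    · refine ⟨fun e => h.ne ?_, Or.inl (Or.inl ⟨hu,hv,h⟩)⟩
      exact Fin.ext (congrArg Fin.val e : (u:ℕ) = (v:ℕ))
    · exact ⟨fun e => by have := congrArg Fin.val e; omega, Or.inl (Or.inr ⟨hu, he⟩)⟩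
    · exact ⟨fun e => by have := congrArg Fin.val e; omega, Or.inr (Or.inr ⟨hv, he⟩)⟩

lemma wsum_b {m : ℕ} (G : SimpleGraph (Fin m)) (μ : Fin (m+m) → ℚ) (k : Fin m) :
    ∑ r, μ r * ((lap (whisker G) r ⟨m + k.val, by omega⟩ : ℤ) : ℚ)
      = μ ⟨m + k.val, by omega⟩ - μ ⟨k.val, by omega⟩ := by
  have hk : (m : ℕ) + k.val < m + m := by omega
  have hk2 : (k : ℕ) < m + m := by omega
  have hc : ∀ v : Fin (m+m), (whisker G).Adj ⟨m + k.val, hk⟩ v ↔ v = ⟨k.val, hk2⟩ := by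
    intro v
    rw [whisker_adj]
    simp only [Fin.val_mk]
    constructor
    · rintro (⟨hu,hv,h⟩|⟨hu,he⟩|⟨hv,he⟩)
      · omega
      · omega
      · exact Fin.ext (show (v:ℕ) = k.val by omega)
    · rintro rfl
      simp only [Fin.val_mk]
      right; right; exact ⟨k.isLt, by omega⟩
  have hc2 : ∀ r : Fin (m+m), (whisker G).Adj r ⟨m + k.val, hk⟩ ↔ r = ⟨k.val, hk2⟩ := by
    intro r; rw [SimpleGraph.adj_comm]; exact hc r
  calc ∑ r, μ r * ((lap (whisker G) r ⟨m + k.val, hk⟩ : ℤ) : ℚ)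
      = ∑ r, ((if r = ⟨m + k.val, hk⟩ then μ r * (∑ v, if (whisker G).Adj r v then (1:ℚ) else 0) else 0)
          - (if r = ⟨k.val, hk2⟩ then μ r else 0)) := by
        refine Finset.sum_congr rfl fun r _ => ?_
        rw [lap_apply_q, hc2 r, mul_sub]
        congr 1
        · rw [mul_ite, mul_zero]
        · rw [mul_ite, mul_one, mul_zero]
          exact ite_congr rfl (fun _ => rfl) (fun _ => rfl)
    _ = μ ⟨m + k.val, hk⟩ * (∑ v, if (whisker G).Adj ⟨m + k.val, hk⟩ v then (1:ℚ) else 0)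
          - μ ⟨k.val, hk2⟩ := by
        rw [Finset.sum_sub_distrib, Finset.sum_ite_eq' univ, Finset.sum_ite_eq' univ]
        simp
    _ = μ ⟨m + k.val, hk⟩ - μ ⟨k.val, hk2⟩ := by
        have h1 : (∑ v, if (whisker G).Adj ⟨m + k.val, hk⟩ v then (1:ℚ) else 0) = 1 := by
          rw [Finset.sum_congr rfl fun v _ => if_congr (hc v) rfl rfl, Finset.sum_ite_eq' univ]
          simp
        rw [h1, mul_one]

lemma castAdd_mk {m : ℕ} (v : Fin m) : Fin.castAdd m v = (⟨v.val, by omega⟩ : Fin (m+m)) := rfl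
lemma natAdd_mk {m : ℕ} (v : Fin m) : Fin.natAdd m v = (⟨m + v.val, by omega⟩ : Fin (m+m)) := rfl

lemma wsum_a {m : ℕ} (G : SimpleGraph (Fin m)) (μ : Fin (m+m) → ℚ) (k : Fin m) :
    ∑ r, μ r * ((lap (whisker G) r ⟨k.val, by omega⟩ : ℤ) : ℚ)
      = (∑ r : Fin m, μ ⟨r.val, by omega⟩ * ((lap G r k : ℤ) : ℚ))
        + μ ⟨k.val, by omega⟩ - μ ⟨m + k.val, by omega⟩ := by
  have hk : (m : ℕ) + k.val < m + m := by omega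
  have hk2 : (k : ℕ) < m + m := by omega
  have hA : ∀ v : Fin (m+m), (whisker G).Adj ⟨k.val, hk2⟩ v ↔
      ((∃ hv : (v:ℕ) < m, G.Adj k ⟨(v:ℕ), hv⟩) ∨ v = ⟨m + k.val, hk⟩) := by
    intro v
    rw [whisker_adj]
    simp only [Fin.val_mk]
    constructor
    · rintro (⟨hu,hv,h⟩|⟨hu,he⟩|⟨hv,he⟩)
      · exact Or.inl ⟨hv, by simpa [Fin.eta] using h⟩
      · exact Or.inr (Fin.ext (show (v:ℕ) = m + k.val by omega))
      · omega
    · rintro (⟨hv,h⟩|rfl)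
      · exact Or.inl ⟨k.isLt, hv, by simpa [Fin.eta] using h⟩
      · simp only [Fin.val_mk]
        exact Or.inr (Or.inl ⟨k.isLt, by omega⟩)
  have hA2 : ∀ r : Fin (m+m), (whisker G).Adj r ⟨k.val, hk2⟩ ↔
      ((∃ hr : (r:ℕ) < m, G.Adj k ⟨(r:ℕ), hr⟩) ∨ r = ⟨m + k.val, hk⟩) := by
    intro r; rw [SimpleGraph.adj_comm]; exact hA r
  have hD : (∑ v, if (whisker G).Adj ⟨k.val, hk2⟩ v then (1:ℚ) else 0)
      = (∑ v : Fin m, if G.Adj k v then (1:ℚ) else 0) + 1 := by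
    rw [Finset.sum_congr rfl fun v _ => if_congr (hA v) rfl rfl, Fin.sum_univ_add]
    congr 1
    · refine Finset.sum_congr rfl fun v _ => if_congr ?_ rfl rfl
      rw [castAdd_mk]
      simp only [Fin.val_mk]
      constructor
      · rintro (⟨hv, h⟩|he)
        · simpa [Fin.eta] using h
        · exfalso; have := congrArg Fin.val he; simp only [Fin.val_mk] at this; omega
      · intro h; exact Or.inl ⟨v.isLt, by simpa [Fin.eta] using h⟩
    · rw [Finset.sum_congr rfl fun v (_ : v ∈ univ) => if_congr
        (show (∃ hv : ((Fin.natAdd m v : Fin (m+m)):ℕ) < m, G.Adj k ⟨_, hv⟩) ∨ Fin.natAdd m v = ⟨m + k.val, hk⟩ ↔ v = k by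
          rw [natAdd_mk]
          simp only [Fin.val_mk]
          constructor
          · rintro (⟨hv, _⟩|he)
            · omega
            · have := congrArg Fin.val he; simp only [Fin.val_mk] at this
              exact Fin.ext (by omega)
          · rintro rfl; exact Or.inr rfl) rfl rfl]
      rw [Finset.sum_ite_eq' univ]
      simp
  calc ∑ r, μ r * ((lap (whisker G) r ⟨k.val, hk2⟩ : ℤ) : ℚ)
      = ∑ r, ((if r = ⟨k.val, hk2⟩ then μ r * (∑ v, if (whisker G).Adj r v then (1:ℚ) else 0) else 0)
          - μ r * (if (whisker G).Adj r ⟨k.val, hk2⟩ then (1:ℚ) else 0)) := by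
        refine Finset.sum_congr rfl fun r _ => ?_
        rw [lap_apply_q, mul_sub]
        congr 1
        rw [mul_ite, mul_zero]
    _ = μ ⟨k.val, hk2⟩ * (∑ v, if (whisker G).Adj ⟨k.val, hk2⟩ v then (1:ℚ) else 0)
          - ∑ r, μ r * (if (whisker G).Adj r ⟨k.val, hk2⟩ then (1:ℚ) else 0) := by
        rw [Finset.sum_sub_distrib, Finset.sum_ite_eq' univ]
        simp
    _ = μ ⟨k.val, hk2⟩ * ((∑ v : Fin m, if G.Adj k v then (1:ℚ) else 0) + 1)
          - ((∑ r : Fin m, μ ⟨r.val, by omega⟩ * (if G.Adj k r then (1:ℚ) else 0)) + μ ⟨m + k.val, hk⟩) := by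
        rw [hD]
        congr 1
        rw [Fin.sum_univ_add]
        congr 1
        · refine Finset.sum_congr rfl fun r _ => ?_
          rw [castAdd_mk]
          congr 1
          refine if_congr ?_ rfl rfl
          rw [hA2]
          simp only [Fin.val_mk]
          constructor
          · rintro (⟨hr, h⟩|he)
            · simpa [Fin.eta] using h
            · exfalso; have := congrArg Fin.val he; simp only [Fin.val_mk] at this; omega
          · intro h; exact Or.inl ⟨r.isLt, by simpa [Fin.eta] using h⟩
        · rw [Finset.sum_congr rfl fun r (_ : r ∈ univ) => ?_, Finset.sum_ite_eq' univ (⟨k.val, by omega⟩ : Fin m) (fun r => μ ⟨m + r.val, by omega⟩)]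
          · simp only [mem_univ, if_pos]
          · rw [natAdd_mk, mul_ite, mul_one, mul_zero]
            refine if_congr ?_ rfl rfl
            rw [hA2]
            simp only [Fin.val_mk]
            constructor
            · rintro (⟨hr, _⟩|he)
              · omega
              · have := congrArg Fin.val he; simp only [Fin.val_mk] at this
                exact Fin.ext (by simpa using by omega)
            · rintro rfl
              exact Or.inr (Fin.ext (by simp))
    _ = (∑ r : Fin m, μ ⟨r.val, by omega⟩ * ((lap G r k : ℤ) : ℚ))
        + μ ⟨k.val, hk2⟩ - μ ⟨m + k.val, hk⟩ := by
        have hR : (∑ r : Fin m, μ ⟨r.val, by omega⟩ * ((lap G r k : ℤ) : ℚ))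
            = μ ⟨k.val, by omega⟩ * (∑ v : Fin m, if G.Adj k v then (1:ℚ) else 0)
              - ∑ r : Fin m, μ ⟨r.val, by omega⟩ * (if G.Adj k r then (1:ℚ) else 0) := by
          rw [Finset.sum_congr rfl fun r (_ : r ∈ univ) => ?_, Finset.sum_sub_distrib]
          · congr 1
            · rw [Finset.sum_ite_eq' univ k (fun r => μ (⟨r.val, by omega⟩ : Fin (m+m)) * (∑ v : Fin m, if G.Adj r v then (1:ℚ) else 0))]
              simp only [mem_univ, if_pos]
          · rw [lap_apply_q, mul_sub]
            congr 1
            · rw [mul_ite, mul_zero]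
            · rw [if_congr (G.adj_comm r k) rfl rfl]
        rw [hR]
        ring

lemma lap_symm {M : ℕ} (H : SimpleGraph (Fin M)) (i j : Fin M) :
    lap H i j = lap H j i := by
  rcases eq_or_ne i j with rfl | h
  · rfl
  · rw [lap_apply, lap_apply, if_neg h, if_neg (Ne.symm h), H.adj_comm i j]


lemma lap_rowsum {M : ℕ} (H : SimpleGraph (Fin M)) (j : Fin M) :
    ∑ k, lap H j k = 0 := by
  simp [lap_apply, Finset.sum_sub_distrib, Finset.sum_ite_eq]

lemma lap_colsum {M : ℕ} (H : SimpleGraph (Fin M)) (k : Fin M) :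
    ∑ j, lap H j k = 0 := by
  simp_rw [fun j => lap_symm H j k]
  exact lap_rowsum H k

lemma lap_map_q {M : ℕ} (H : SimpleGraph (Fin M)) (i j : Fin M) :
    ((lap H i j : ℤ) : ℚ) = SimpleGraph.lapMatrix ℚ H i j := by
  show _ = (SimpleGraph.degMatrix ℚ H - SimpleGraph.adjMatrix ℚ H) i j
  show _ = SimpleGraph.degMatrix ℚ H i j - SimpleGraph.adjMatrix ℚ H i j
  show ((SimpleGraph.lapMatrix ℤ H i j : ℤ) : ℚ) = _
  show (((SimpleGraph.degMatrix ℤ H i j - SimpleGraph.adjMatrix ℤ H i j : ℤ)) : ℚ) = _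
  push_cast
  congr 1
  · simp [SimpleGraph.degMatrix, Matrix.diagonal_apply]

  · simp [SimpleGraph.adjMatrix_apply]


lemma lap_kernel_const {M : ℕ} (H : SimpleGraph (Fin M)) (hH : H.Connected)
    (x : Fin M → ℚ) (hx : ∀ j, ∑ k, (lap H j k : ℚ) * x k = 0) :
    ∀ i j, x i = x j := by
  have hmv : SimpleGraph.lapMatrix ℚ H *ᵥ x = 0 := by
    funext j
    have := hx j
    simpa [Matrix.mulVec, dotProduct, lap_map_q] using this
  have h2 : Matrix.toLinearMap₂' ℚ (SimpleGraph.lapMatrix ℚ H) x x = 0 := by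
    rw [Matrix.toLinearMap₂'_apply', hmv]
    simp
  have hadj := (SimpleGraph.lapMatrix_toLinearMap₂'_apply'_eq_zero_iff_forall_adj ℚ H x).mp h2
  intro i j
  obtain ⟨w⟩ := hH.preconnected i j
  induction w with
  | nil => rfl
  | cons hA _ h' => exact (hadj _ _ hA).trans h'

end Aux

lemma key {n : ℕ} (G : SimpleGraph (Fin (n+1))) (hG : G.Connected)
    (href : IsReflexive (PG G)) (r : Fin (n+1)) :
    ∃ w : Fin (n+1) → ℤ, ∀ j, ∑ k, lap G j k * w k = if j = r then 1 - (n+1 : ℤ) else 1 := by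
  obtain ⟨-, S0, hSint0, hdual0⟩ := href
  obtain ⟨S, hSint, hdual⟩ : ∃ S : Finset (Fin n → ℝ),
      (∀ v ∈ S, ∀ i : Fin n, ∃ z : ℤ, v i = (z : ℝ)) ∧
      {x : Fin n → ℝ | ∀ y ∈ PG G, ∑ i, x i * y i ≤ 1}
        = convexHull ℝ (S : Set (Fin n → ℝ)) := ⟨S0, hSint0, hdual0⟩
  -- the n×n matrix of rows ≠ r, column n deleted
  set A : Matrix (Fin n) (Fin n) ℚ :=
    Matrix.of fun j k => ((lap G (r.succAbove j) ⟨k.val, by omega⟩ : ℤ) : ℚ) with hA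
  -- Step 1 : A is injective
  have h_inj : ∀ x : Fin n → ℚ, A *ᵥ x = 0 → x = 0 := by
    intro x hx
    set xt : Fin (n+1) → ℚ := fun k => if h : k.val < n then x ⟨k.val, h⟩ else 0 with hxt
    have hrow : ∀ j : Fin n, ∑ k, (lap G (r.succAbove j) k : ℚ) * xt k = 0 := by
      intro j
      rw [Fin.sum_univ_castSucc]
      have hlast : xt (Fin.last n) = 0 := by simp [hxt, Fin.last]
      rw [hlast, mul_zero, add_zero]
      have := congrFun hx j
      simp only [Matrix.mulVec, dotProduct, Pi.zero_apply] at this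
      rw [← this]
      refine Finset.sum_congr rfl fun k _ => ?_
      have h1 : xt (Fin.castSucc k) = x k := by
        simp [hxt, Fin.castSucc, Fin.castAdd, Fin.castLE]
      rw [h1]
      rfl
    have hall : ∀ j : Fin (n+1), ∑ k, (lap G j k : ℚ) * xt k = 0 := by
      have htot : ∑ j : Fin (n+1), (∑ k, (lap G j k : ℚ) * xt k) = 0 := by
        rw [Finset.sum_comm]
        refine Finset.sum_eq_zero fun k _ => ?_
        rw [← Finset.sum_mul]
        have : (∑ j, (lap G j k : ℚ)) = 0 := by exact_mod_cast congrArg (fun z : ℤ => (z : ℚ)) (lap_colsum G k)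
        rw [this, zero_mul]
      have hr0 : ∑ k, (lap G r k : ℚ) * xt k = 0 := by
        rw [Fin.sum_univ_succAbove _ r] at htot
        have : ∑ i : Fin n, ∑ k, (lap G (r.succAbove i) k : ℚ) * xt k = 0 :=
          Finset.sum_eq_zero fun i _ => hrow i
        linarith [htot, this]
      intro j
      rcases eq_or_ne j r with rfl | hne
      · exact hr0
      · obtain ⟨j', rfl⟩ := Fin.exists_succAbove_eq hne
        exact hrow j'
    have hconst := lap_kernel_const G hG xt hall
    funext k
    have h1 : xt ⟨k.val, by omega⟩ = x k := by simp [hxt]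
    have h2 : xt ⟨n, by omega⟩ = 0 := by simp [hxt]
    rw [← h1, hconst ⟨k.val, by omega⟩ ⟨n, by omega⟩, h2]
    rfl
  -- Step 2 : surjectivity, solve A u = 1
  obtain ⟨u, hu⟩ : ∃ u : Fin n → ℚ, A *ᵥ u = fun _ => 1 := by
    have hker : LinearMap.ker A.mulVecLin = ⊥ :=
      LinearMap.ker_eq_bot'.mpr fun x hx => h_inj x hx
    have hinj := LinearMap.ker_eq_bot.mp hker
    exact LinearMap.injective_iff_surjective.mp hinj (fun _ => 1)
  -- Step 3 : row sums with u
  have hne : ∀ j : Fin n, ∑ k : Fin n, ((lap G (r.succAbove j) ⟨k.val, by omega⟩ : ℤ) : ℚ) * u k = 1 := by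
    intro j
    have := congrFun hu j
    simpa [Matrix.mulVec, dotProduct, hA] using this
  have hrr : ∑ k : Fin n, ((lap G r ⟨k.val, by omega⟩ : ℤ) : ℚ) * u k = -(n : ℚ) := by
    have htot : ∑ j : Fin (n+1), (∑ k : Fin n, ((lap G j ⟨k.val, by omega⟩ : ℤ) : ℚ) * u k) = 0 := by
      rw [Finset.sum_comm]
      refine Finset.sum_eq_zero fun k _ => ?_
      rw [← Finset.sum_mul]
      have : (∑ j, ((lap G j ⟨k.val, by omega⟩ : ℤ) : ℚ)) = 0 := by
        exact_mod_cast congrArg (fun z : ℤ => (z : ℚ)) (lap_colsum G ⟨k.val, by omega⟩)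
      rw [this, zero_mul]
    rw [Fin.sum_univ_succAbove _ r] at htot
    have h2 : ∑ i : Fin n, ∑ k : Fin n, ((lap G (r.succAbove i) ⟨k.val, by omega⟩ : ℤ) : ℚ) * u k = n := by
      rw [Finset.sum_congr rfl fun i _ => hne i]
      simp
    rw [h2] at htot
    linarith
  -- Step 4 : the candidate dual vertex over ℝ
  set V : Fin (n+1) → (Fin n → ℝ) :=
    fun r' => fun j : Fin n => ((lap G r' ⟨(j : ℕ), by omega⟩ : ℤ) : ℝ) with hV
  have hPG : PG G = convexHull ℝ (Set.range V) := rfl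
  set ub : Fin n → ℝ := fun k => ((u k : ℚ) : ℝ) with hub
  have hvert : ∀ r' : Fin (n+1), ∑ i, ub i * V r' i = if r' = r then -(n:ℝ) else 1 := by
    intro r'
    have hcast : ∀ (q : ℚ), (∑ k : Fin n, ((lap G r' ⟨k.val, by omega⟩ : ℤ) : ℚ) * u k) = q →
        ∑ i, ub i * V r' i = (q : ℝ) := by
      intro q hq
      have := congrArg (fun z : ℚ => (z : ℝ)) hq
      push_cast at this
      rw [← this]
      refine Finset.sum_congr rfl fun i _ => ?_
      rw [mul_comm]
      try norm_cast
    rcases eq_or_ne r' r with rfl | hne'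
    · rw [if_pos rfl]
      have := hcast (-(n:ℚ)) hrr
      rw [this]; push_cast; try ring
    · rw [if_neg hne']
      obtain ⟨j', rfl⟩ := Fin.exists_succAbove_eq hne'
      have := hcast 1 (hne j')
      rw [this]; norm_num
  have hdu : ub ∈ {x : Fin n → ℝ | ∀ y ∈ PG G, ∑ i, x i * y i ≤ 1} := by
    intro y hy
    rw [hPG] at hy
    have hC : Convex ℝ {y : Fin n → ℝ | ∑ i, ub i * y i ≤ 1} := by
      refine convex_halfSpace_le ?_ 1
      constructor
      · intro a b; simp [mul_add, Finset.sum_add_distrib]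
      · intro c a
        simp only [Pi.smul_apply, smul_eq_mul, Finset.mul_sum]
        exact Finset.sum_congr rfl fun i _ => by ring
    have hsub : Set.range V ⊆ {y : Fin n → ℝ | ∑ i, ub i * y i ≤ 1} := by
      rintro _ ⟨r', rfl⟩
      show ∑ i, ub i * V r' i ≤ 1
      rw [hvert r']
      split
      · have : (0:ℝ) ≤ n := Nat.cast_nonneg n
        linarith
      · exact le_refl _
    exact convexHull_min hsub hC hy
  -- Step 5 : decompose ub as convex combination of S
  rw [hdual] at hdu
  obtain ⟨c, hc0, hc1, hcs⟩ := Finset.mem_convexHull'.mp hdu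
  have hub2 : ∀ i : Fin n, ub i = ∑ s ∈ S, c s * s i := by
    intro i
    have := congrFun hcs i
    rw [← this]
    simp [Finset.sum_apply]
  -- Step 6 : find an integral dual vertex
  have hVP : ∀ r' : Fin (n+1), V r' ∈ PG G := by
    intro r'
    rw [hPG]
    exact subset_convexHull ℝ _ ⟨r', rfl⟩
  have hsdual : ∀ s ∈ S, ∀ y ∈ PG G, ∑ i, s i * y i ≤ 1 := by
    intro s hs
    have : s ∈ {x : Fin n → ℝ | ∀ y ∈ PG G, ∑ i, x i * y i ≤ 1} := by
      rw [hdual]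
      exact subset_convexHull ℝ _ (Finset.mem_coe.mpr hs)
    exact this
  have hTs : ∀ s ∈ S, (∑ j : Fin n, ∑ i, s i * V (r.succAbove j) i) ≤ n := by
    intro s hs
    calc (∑ j : Fin n, ∑ i, s i * V (r.succAbove j) i) ≤ ∑ _j : Fin n, (1:ℝ) :=
          Finset.sum_le_sum fun j _ => hsdual s hs _ (hVP (r.succAbove j))
      _ = n := by simp
  have hTu : (∑ j : Fin n, ∑ i, ub i * V (r.succAbove j) i) = n := by
    rw [Finset.sum_congr rfl fun j _ => hvert (r.succAbove j)]
    rw [Finset.sum_congr rfl fun j (_ : j ∈ univ) => if_neg (Fin.succAbove_ne r j)]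
    simp
  have hTlin : (∑ j : Fin n, ∑ i, ub i * V (r.succAbove j) i)
      = ∑ s ∈ S, c s * (∑ j : Fin n, ∑ i, s i * V (r.succAbove j) i) := by
    simp only [hub2, Finset.sum_mul]
    rw [Finset.sum_congr rfl fun j (_ : j ∈ univ) => Finset.sum_comm]
    rw [Finset.sum_comm]
    refine Finset.sum_congr rfl fun s _ => ?_
    simp only [Finset.mul_sum]
    exact Finset.sum_congr rfl fun j _ => Finset.sum_congr rfl fun i _ => by ring
  have heq : ∀ s ∈ S, c s * (∑ j : Fin n, ∑ i, s i * V (r.succAbove j) i) = c s * n := by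
    have h1 : ∑ s ∈ S, c s * (∑ j : Fin n, ∑ i, s i * V (r.succAbove j) i) = ∑ s ∈ S, c s * n := by
      rw [← hTlin, hTu, ← Finset.sum_mul, hc1, one_mul]
    exact (Finset.sum_eq_sum_iff_of_le
      (fun s hs => mul_le_mul_of_nonneg_left (hTs s hs) (hc0 s hs))).mp h1
  obtain ⟨s₀, hs₀S, hcne⟩ : ∃ s₀ ∈ S, c s₀ ≠ 0 := by
    refine Finset.exists_ne_zero_of_sum_ne_zero (h := ?_)
    rw [hc1]; exact one_ne_zero
  have hTn : (∑ j : Fin n, ∑ i, s₀ i * V (r.succAbove j) i) = n :=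
    mul_left_cancel₀ hcne (heq s₀ hs₀S)
  have hfac : ∀ j : Fin n, ∑ i, s₀ i * V (r.succAbove j) i = 1 := by
    have h1 : ∑ j : Fin n, (∑ i, s₀ i * V (r.succAbove j) i) = ∑ _j : Fin n, (1:ℝ) := by
      rw [hTn]; simp
    intro j
    exact (Finset.sum_eq_sum_iff_of_le
      (fun j _ => hsdual s₀ hs₀S _ (hVP (r.succAbove j)))).mp h1 j (Finset.mem_univ j)
  -- Step 7 : integrality
  choose z hz using hSint s₀ hs₀S
  have hZ : ∀ j' : Fin n, ∑ k : Fin n, lap G (r.succAbove j') ⟨k.val, by omega⟩ * z k = 1 := by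
    intro j'
    have h2 : ∑ i : Fin n, ((lap G (r.succAbove j') ⟨i.val, by omega⟩ * z i : ℤ) : ℝ) = 1 := by
      push_cast
      rw [← hfac j']
      refine Finset.sum_congr rfl fun i _ => ?_
      rw [hz i]
      show _ = ((z i : ℝ)) * V (r.succAbove j') i
      simp only [hV]
      ring
    exact_mod_cast h2
  set w : Fin (n+1) → ℤ := fun k => if h : k.val < n then z ⟨k.val, h⟩ else 0 with hw
  refine ⟨w, ?_⟩
  have hrow : ∀ j' : Fin n, ∑ k : Fin (n+1), lap G (r.succAbove j') k * w k = 1 := by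
    intro j'
    rw [Fin.sum_univ_castSucc]
    have hlast : w (Fin.last n) = 0 := by simp [hw, Fin.last]
    rw [hlast, mul_zero, add_zero, ← hZ j']
    refine Finset.sum_congr rfl fun k _ => ?_
    have h3 : w (Fin.castSucc k) = z k := by simp [hw, Fin.castSucc, Fin.castAdd, Fin.castLE]
    rw [h3]
    rfl
  intro j
  rcases eq_or_ne j r with heq | hne2
  · rw [if_pos heq, heq]
    have htot : ∑ j : Fin (n+1), ∑ k, lap G j k * w k = 0 := by
      rw [Finset.sum_comm]
      refine Finset.sum_eq_zero fun k _ => ?_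
      rw [← Finset.sum_mul, lap_colsum, zero_mul]
    rw [Fin.sum_univ_succAbove _ r] at htot
    have h2 : ∑ i : Fin n, ∑ k, lap G (r.succAbove i) k * w k = n := by
      rw [Finset.sum_congr rfl fun i _ => hrow i]
      simp
    rw [h2] at htot
    omega
  · rw [if_neg hne2]
    obtain ⟨j', rfl⟩ := Fin.exists_succAbove_eq hne2
    exact hrow j'
lemma lastcol {n : ℕ} (G : SimpleGraph (Fin (n+1))) (lam : Fin (n+1) → ℚ)
    (h : ∀ k : Fin (n+1), k.val < n → ∃ z : ℤ, ∑ r, lam r * ((lap G r k : ℤ):ℚ) = z) :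
    ∀ k : Fin (n+1), ∃ z : ℤ, ∑ r, lam r * ((lap G r k : ℤ):ℚ) = z := by
  have hlastk : ∃ z : ℤ, ∑ r, lam r * ((lap G r ⟨n, by omega⟩ : ℤ):ℚ) = z := by
    have htot : ∑ k : Fin (n+1), ∑ r, lam r * ((lap G r k : ℤ):ℚ) = 0 := by
      rw [Finset.sum_comm]
      refine Finset.sum_eq_zero fun r _ => ?_
      rw [← Finset.mul_sum]
      have h0 : (∑ k, ((lap G r k : ℤ):ℚ)) = 0 := by
        exact_mod_cast congrArg (fun z : ℤ => (z:ℚ)) (lap_rowsum G r)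
      rw [h0, mul_zero]
    choose zf hzf using h
    refine ⟨-(∑ k : Fin n, zf ⟨k.val, by omega⟩ k.isLt), ?_⟩
    rw [Fin.sum_univ_castSucc] at htot
    have h1 : ∑ k : Fin n, (∑ r, lam r * ((lap G r (Fin.castSucc k) : ℤ):ℚ))
        = ((∑ k : Fin n, zf ⟨k.val, by omega⟩ k.isLt : ℤ) : ℚ) := by
      push_cast
      refine Finset.sum_congr rfl fun k _ => ?_
      exact hzf ⟨k.val, by omega⟩ k.isLt
    rw [h1] at htot
    have : (Fin.last n) = (⟨n, by omega⟩ : Fin (n+1)) := rfl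
    rw [this] at htot
    push_cast at htot ⊢
    linarith
  intro k
  rcases lt_or_ge k.val n with h' | h'
  · exact h k h'
  · have hk : k = ⟨n, by omega⟩ := Fin.ext (by simp only [Fin.val_mk]; omega)
    rw [hk]; exact hlastk


lemma shift {n : ℕ} (G : SimpleGraph (Fin (n+1))) (hG : G.Connected)
    (href : IsReflexive (PG G)) (lam : Fin (n+1) → ℚ)
    (hall : ∀ k : Fin (n+1), ∃ z : ℤ, ∑ r, lam r * ((lap G r k : ℤ):ℚ) = z) (r : Fin (n+1)) :
    ∃ z : ℤ, (∑ j, lam j) - ((n:ℚ)+1) * lam r = z := by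
  obtain ⟨w, hw⟩ := key G hG href r
  choose zc hzc using hall
  refine ⟨∑ k, zc k * w k, ?_⟩
  have step1 : (∑ j, lam j) - ((n:ℚ)+1) * lam r
      = ∑ j, lam j * (((if j = r then 1 - (n+1 : ℤ) else 1) : ℤ) : ℚ) := by
    have hterm : ∀ j : Fin (n+1), lam j * (((if j = r then 1 - (n+1 : ℤ) else 1) : ℤ) : ℚ)
        = lam j + (if j = r then -(((n:ℚ)+1)) * lam j else 0) := by
      intro j
      split <;> push_cast <;> ring
    rw [Finset.sum_congr rfl fun j _ => hterm j, Finset.sum_add_distrib,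
      Finset.sum_ite_eq' univ]
    simp only [mem_univ, if_pos]
    ring
  rw [step1, Finset.sum_congr rfl fun j (_ : j ∈ univ) => by rw [← hw j]]
  have step2 : ∑ j, lam j * ((∑ k, lap G j k * w k : ℤ) : ℚ)
      = ∑ k, (∑ j, lam j * ((lap G j k : ℤ):ℚ)) * ((w k : ℤ):ℚ) := by
    push_cast
    simp only [Finset.mul_sum]
    rw [Finset.sum_comm]
    refine Finset.sum_congr rfl fun k _ => ?_
    rw [Finset.sum_mul]
    refine Finset.sum_congr rfl fun j _ => ?_
    ring
  rw [step2, Finset.sum_congr rfl fun k (_ : k ∈ univ) => by rw [hzc k]]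
  push_cast
  rfl

lemma sum_split {m : ℕ} (f : Fin (m+m) → ℚ) :
    ∑ r, f r = (∑ r : Fin m, f ⟨r.val, by omega⟩) + ∑ r : Fin m, f ⟨m + r.val, by omega⟩ := by
  rw [Fin.sum_univ_add]
  rfl

lemma hvm {N : ℕ} (M : Matrix (Fin N) (Fin N) ℤ) (lam : Fin N → ℚ) (j : Fin N) :
    Matrix.vecMul lam (M.map (fun a : ℤ => (a:ℚ))) j = ∑ r, lam r * ((M r j : ℤ):ℚ) := by
  simp [Matrix.vecMul, dotProduct, Matrix.map_apply]


set_option maxHeartbeats 2000000 in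
/-- If `P_G` is reflexive (`G` on `n+1` vertices), then
`Λ(P_{W(G)}) = { (λ,λ) + (i/(2(n+1)))·𝟙 : λ ∈ Λ(P_G), i ∈ {0,1} }`, where `Λ(P_{W(G)})`
is computed with respect to `[L_{W(G)}(n+1)|𝟙]` (the column of the last vertex of `G`
being deleted from `L_{W(G)}`). -/
theorem Lambda_whisker_eq {n : ℕ}
    (G : SimpleGraph (Fin (n+1))) (hG : G.Connected)
    (href : IsReflexive (PG G)) :
    Lambda (lapAugAt (whisker G) ⟨n, by omega⟩) =
      {mu : Fin ((n+1) + (n+1)) → ℚ |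
        ∃ lam ∈ Lambda (lapAug G), ∃ i : ℕ, i ≤ 1 ∧
          mu = fun j : Fin ((n+1) + (n+1)) =>
            lam ⟨(j : ℕ) % (n+1), Nat.mod_lt _ n.succ_pos⟩
              + (i : ℚ) / (2 * ((n : ℚ) + 1))} := by
  have hentry : ∀ (r j : Fin ((n+1)+(n+1))),
      lapAugAt (whisker G) (⟨n, by omega⟩ : Fin ((n+1)+(n+1))) r j
      = if h : (j:ℕ)+1 = (n+1)+(n+1) then 1
        else lap (whisker G) r (if (j:ℕ) < n then j
          else ⟨(j:ℕ)+1, by have := j.isLt; omega⟩) := fun r j => rfl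
  have hentry2 : ∀ (r j : Fin (n+1)), lapAug G r j
      = if (j:ℕ)+1 = n+1 then 1 else lap G r j := fun r j => rfl
  ext μ
  constructor
  · rintro ⟨hbd, hcol⟩
    have hcol' : ∀ j : Fin ((n+1)+(n+1)), ∃ z : ℤ,
        ∑ r, μ r * (((lapAugAt (whisker G) ⟨n, by omega⟩) r j : ℤ):ℚ) = z := by
      intro j
      obtain ⟨z, hz⟩ := hcol j
      exact ⟨z, by rw [← hvm]; exact hz⟩
    -- b = a
    have hba : ∀ k : Fin (n+1), μ ⟨(n+1) + k.val, by omega⟩ = μ ⟨k.val, by omega⟩ := by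
      intro k
      obtain ⟨z, hz⟩ := hcol' ⟨n + k.val, by omega⟩
      rw [Finset.sum_congr rfl fun r (_ : r ∈ univ) => by
        rw [hentry r ⟨n + k.val, by omega⟩, dif_neg (by simp only [Fin.val_mk]; omega),
          if_neg (by simp only [Fin.val_mk]; omega)]] at hz
      have hcolEq : (⟨((⟨n + k.val, by omega⟩ : Fin ((n+1)+(n+1))) : ℕ) + 1,
          by simp only [Fin.val_mk]; omega⟩ : Fin ((n+1)+(n+1)))
          = ⟨(n+1) + k.val, by omega⟩ := Fin.ext (by simp only [Fin.val_mk]; omega)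
      rw [Finset.sum_congr rfl fun r (_ : r ∈ univ) => by rw [hcolEq]] at hz
      rw [wsum_b G μ k] at hz
      have h1 := hbd ⟨(n+1) + k.val, by omega⟩
      have h2 := hbd ⟨k.val, by omega⟩
      have hz0 : z = 0 := by
        have ha : (-1 : ℚ) < z := by rw [← hz]; linarith [h1.1, h1.2, h2.1, h2.2]
        have hb : (z : ℚ) < 1 := by rw [← hz]; linarith [h1.1, h1.2, h2.1, h2.2]
        have ha' : (-1 : ℤ) < z := by exact_mod_cast ha
        have hb' : z < 1 := by exact_mod_cast hb
        omega
      rw [hz0] at hz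
      push_cast at hz
      linarith
    -- integrality of a·L_G on columns k < n
    have hint : ∀ k : Fin (n+1), k.val < n →
        ∃ z : ℤ, ∑ r : Fin (n+1), μ ⟨r.val, by omega⟩ * ((lap G r k : ℤ):ℚ) = z := by
      intro k hk
      obtain ⟨z, hz⟩ := hcol' ⟨k.val, by omega⟩
      rw [Finset.sum_congr rfl fun r (_ : r ∈ univ) => by
        rw [hentry r ⟨k.val, by omega⟩, dif_neg (by simp only [Fin.val_mk]; omega),
          if_pos (by simp only [Fin.val_mk]; omega)]] at hz
      have hw : ∑ r, μ r * ((lap (whisker G) r (⟨k.val, by omega⟩ : Fin ((n+1)+(n+1))) : ℤ) : ℚ)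
          = (∑ r : Fin (n+1), μ ⟨r.val, by omega⟩ * ((lap G r k : ℤ) : ℚ))
            + μ ⟨k.val, by omega⟩ - μ ⟨(n+1) + k.val, by omega⟩ := wsum_a G μ k
      rw [hw] at hz
      refine ⟨z, ?_⟩
      rw [← hz, hba k]
      ring
    have hintall := lastcol G (fun r => μ ⟨r.val, by omega⟩) hint
    -- the ones column
    obtain ⟨zo, hzo⟩ := hcol' ⟨n + (n+1), by omega⟩
    rw [Finset.sum_congr rfl fun r (_ : r ∈ univ) => by
      rw [hentry r ⟨n + (n+1), by omega⟩, dif_pos (by simp only [Fin.val_mk]; omega)]] at hzo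
    simp only [Int.cast_one, mul_one] at hzo
    rw [sum_split μ, Finset.sum_congr rfl fun r (_ : r ∈ univ) => hba r] at hzo
    -- hzo : 2 ∑ a = zo  (as sum + sum)
    rcases Int.even_or_odd zo with ⟨y, hy⟩ | ⟨y, hy⟩
    · -- even case : i = 0
      have hsA : (∑ r : Fin (n+1), μ ⟨r.val, by omega⟩) = (y:ℚ) := by
        rw [hy] at hzo
        push_cast at hzo
        linarith
      refine ⟨fun k => μ ⟨k.val, by omega⟩, ⟨fun k => hbd ⟨k.val, by omega⟩, ?_⟩, 0,
        by norm_num, ?_⟩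
      · intro jc
        by_cases hc : (jc:ℕ)+1 = n+1
        · refine ⟨y, ?_⟩
          rw [hvm]
          rw [Finset.sum_congr rfl fun r (_ : r ∈ univ) => by rw [hentry2 r jc, if_pos hc]]
          simp only [Int.cast_one, mul_one]
          exact hsA
        · obtain ⟨z, hz⟩ := hintall jc
          refine ⟨z, ?_⟩
          rw [hvm]
          rw [Finset.sum_congr rfl fun r (_ : r ∈ univ) => by rw [hentry2 r jc, if_neg hc]]
          exact hz
      · funext j
        simp only [Nat.cast_zero, zero_div, add_zero]
        rcases lt_or_ge (j:ℕ) (n+1) with hj | hj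
        · congr 1
          exact Fin.ext (by simp only [Fin.val_mk]; exact (Nat.mod_eq_of_lt hj).symm)
        · have hj2 : j = ⟨(n+1) + ((j:ℕ) - (n+1)), by omega⟩ :=
            Fin.ext (by simp only [Fin.val_mk]; omega)
          rw [hj2, hba ⟨(j:ℕ) - (n+1), by omega⟩]
          congr 1
          refine Fin.ext ?_
          simp only [Fin.val_mk]
          rw [Nat.add_mod_left]
          exact (Nat.mod_eq_of_lt (by omega)).symm
    · -- odd case : i = 1
      have hsA : (∑ r : Fin (n+1), μ ⟨r.val, by omega⟩) = (y:ℚ) + 1/2 := by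
        rw [hy] at hzo
        push_cast at hzo
        linarith
      have hden : (0:ℚ) < 2*((n:ℚ)+1) := by positivity
      have hlow : ∀ rr : Fin (n+1), 1/(2*((n:ℚ)+1)) ≤ μ ⟨rr.val, by omega⟩ := by
        intro rr
        obtain ⟨t, ht⟩ := shift G hG href (fun r => μ ⟨r.val, by omega⟩) hintall rr
        have hyt : (0:ℤ) ≤ y - t := by
          by_contra hcon
          push_neg at hcon
          have h1 : (y:ℚ) - t ≤ -1 := by exact_mod_cast (by omega : (y:ℤ) - t ≤ -1)
          have h2 := (hbd ⟨rr.val, by omega⟩).1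
          nlinarith [ht, hsA]
        have h3 : ((n:ℚ)+1) * μ ⟨rr.val, by omega⟩ ≥ 1/2 := by
          have h4 : ((y:ℚ) - t) ≥ 0 := by exact_mod_cast hyt
          nlinarith [ht, hsA]
        rw [div_le_iff₀ hden]
        nlinarith [h3]
      refine ⟨fun k => μ ⟨k.val, by omega⟩ - 1/(2*((n:ℚ)+1)), ⟨?_, ?_⟩, 1, le_refl 1, ?_⟩
      · intro k
        constructor
        · have := hlow k
          simp only []
          linarith
        · have := (hbd ⟨k.val, by omega⟩).2
          have hpos : (0:ℚ) < 1/(2*((n:ℚ)+1)) := by positivity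
          simp only []
          linarith
      · intro jc
        by_cases hc : (jc:ℕ)+1 = n+1
        · refine ⟨y, ?_⟩
          rw [hvm]
          rw [Finset.sum_congr rfl fun r (_ : r ∈ univ) => by rw [hentry2 r jc, if_pos hc]]
          simp only [Int.cast_one, mul_one]
          rw [Finset.sum_sub_distrib, hsA, Finset.sum_const, card_univ, Fintype.card_fin,
            nsmul_eq_mul]
          push_cast
          field_simp
          ring
        · obtain ⟨z, hz⟩ := hintall jc
          refine ⟨z, ?_⟩
          rw [hvm]
          rw [Finset.sum_congr rfl fun r (_ : r ∈ univ) => by rw [hentry2 r jc, if_neg hc]]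
          have hcs : (∑ r : Fin (n+1), ((lap G r jc : ℤ):ℚ)) = 0 := by
            exact_mod_cast congrArg (fun z : ℤ => (z:ℚ)) (lap_colsum G jc)
          rw [Finset.sum_congr rfl fun r (_ : r ∈ univ) => sub_mul (μ ⟨r.val, by omega⟩)
            (1/(2*((n:ℚ)+1))) (((lap G r jc : ℤ):ℚ)), Finset.sum_sub_distrib, hz,
            ← Finset.mul_sum, hcs, mul_zero, sub_zero]
      · funext j
        simp only [Nat.cast_one]
        rw [sub_add_cancel]
        rcases lt_or_ge (j:ℕ) (n+1) with hj | hj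
        · congr 1
          exact Fin.ext (by simp only [Fin.val_mk]; exact (Nat.mod_eq_of_lt hj).symm)
        · have hj2 : j = ⟨(n+1) + ((j:ℕ) - (n+1)), by omega⟩ :=
            Fin.ext (by simp only [Fin.val_mk]; omega)
          rw [hj2, hba ⟨(j:ℕ) - (n+1), by omega⟩]
          congr 1
          refine Fin.ext ?_
          simp only [Fin.val_mk]
          rw [Nat.add_mod_left]
          exact (Nat.mod_eq_of_lt (by omega)).symm
  · rintro ⟨lam, ⟨hlb, hlcol⟩, i, hi, rfl⟩
    have hlcol' : ∀ jc : Fin (n+1), ∃ z : ℤ,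
        ∑ r, lam r * ((lapAug G r jc : ℤ):ℚ) = z := by
      intro jc
      obtain ⟨z, hz⟩ := hlcol jc
      exact ⟨z, by rw [← hvm]; exact hz⟩
    have hlint : ∀ k : Fin (n+1), k.val < n →
        ∃ z : ℤ, ∑ r, lam r * ((lap G r k : ℤ):ℚ) = z := by
      intro k hk
      obtain ⟨z, hz⟩ := hlcol' k
      refine ⟨z, ?_⟩
      rw [← hz]
      exact Finset.sum_congr rfl fun r _ => by rw [hentry2 r k, if_neg (by omega)]
    have hlall := lastcol G lam hlint
    obtain ⟨zs, hzs⟩ : ∃ z : ℤ, (∑ r, lam r) = (z:ℚ) := by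
      obtain ⟨z, hz⟩ := hlcol' ⟨n, by omega⟩
      refine ⟨z, ?_⟩
      rw [← hz]
      refine (Finset.sum_congr rfl fun r _ => ?_).symm
      rw [hentry2 r ⟨n, by omega⟩, if_pos (by simp only [Fin.val_mk])]
      simp
    have hden : (0:ℚ) < 2*((n:ℚ)+1) := by positivity
    have htnn : (0:ℚ) ≤ (i:ℚ) / (2*((n:ℚ)+1)) := by positivity
    have hP1 : ∀ r : Fin (n+1),
        (⟨((⟨r.val, by omega⟩ : Fin ((n+1)+(n+1))) : ℕ) % (n+1), Nat.mod_lt _ n.succ_pos⟩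
          : Fin (n+1)) = r := by
      intro r
      refine Fin.ext ?_
      simp only [Fin.val_mk]
      exact Nat.mod_eq_of_lt r.isLt
    have hP2 : ∀ r : Fin (n+1),
        (⟨((⟨(n+1) + r.val, by omega⟩ : Fin ((n+1)+(n+1))) : ℕ) % (n+1), Nat.mod_lt _ n.succ_pos⟩
          : Fin (n+1)) = r := by
      intro r
      refine Fin.ext ?_
      simp only [Fin.val_mk]
      rw [Nat.add_mod_left]
      exact Nat.mod_eq_of_lt r.isLt
    set ν : Fin ((n+1) + (n+1)) → ℚ := fun j : Fin ((n+1) + (n+1)) =>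
        lam ⟨(j : ℕ) % (n+1), Nat.mod_lt _ n.succ_pos⟩
          + (i : ℚ) / (2 * ((n : ℚ) + 1)) with hnu
    have hnu1 : ∀ r : Fin (n+1), ν ⟨r.val, by omega⟩ = lam r + (i:ℚ)/(2*((n:ℚ)+1)) := by
      intro r
      rw [hnu]
      simp only []
      rw [hP1 r]
    have hnu2 : ∀ r : Fin (n+1), ν ⟨(n+1) + r.val, by omega⟩
        = lam r + (i:ℚ)/(2*((n:ℚ)+1)) := by
      intro r
      rw [hnu]
      simp only []
      rw [hP2 r]
    constructor
    · -- bounds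
      intro jj
      rw [hnu]
      simp only []
      set rr : Fin (n+1) := ⟨(jj:ℕ) % (n+1), Nat.mod_lt _ n.succ_pos⟩ with hrr
      constructor
      · exact add_nonneg (hlb _).1 htnn
      · rcases (by omega : i = 0 ∨ i = 1) with rfl | rfl
        · simp only [Nat.cast_zero, zero_div, add_zero]
          exact (hlb _).2
        · obtain ⟨t, ht⟩ := shift G hG href lam hlall rr
          obtain ⟨zz, hzz⟩ : ∃ zz : ℤ, ((n:ℚ)+1) * lam rr = zz := by
            refine ⟨zs - t, ?_⟩
            push_cast
            rw [← hzs]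
            linarith [ht]
          have hzn : (zz:ℚ) ≤ n := by
            have h1 : ((n:ℚ)+1) * lam rr < ((n:ℚ)+1) * 1 := by
              have := (hlb rr).2
              apply mul_lt_mul_of_pos_left this
              positivity
            rw [hzz] at h1
            have h2 : zz < n+1 := by exact_mod_cast (by linarith : (zz:ℚ) < (n:ℚ)+1)
            exact_mod_cast (by omega : zz ≤ (n:ℤ))
          have hlt : lam rr + 1/(2*((n:ℚ)+1)) < 1 := by
            have h4 : (1:ℚ)/(2*((n:ℚ)+1)) < 1 - lam rr := by
              rw [div_lt_iff₀ hden]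
              nlinarith [hzz, hzn]
            linarith
          simpa using hlt
    · -- columns
      intro j
      by_cases h1 : (j:ℕ)+1 = (n+1)+(n+1)
      · refine ⟨2*zs + i, ?_⟩
        rw [hvm]
        rw [Finset.sum_congr rfl fun r (_ : r ∈ univ) => by
          rw [hentry r j, dif_pos h1]]
        simp only [Int.cast_one, mul_one]
        rw [sum_split ν]
        rw [Finset.sum_congr rfl fun r (_ : r ∈ univ) => hnu1 r,
          Finset.sum_congr rfl fun r (_ : r ∈ univ) => hnu2 r]
        rw [Finset.sum_add_distrib, Finset.sum_const, card_univ, Fintype.card_fin,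
          nsmul_eq_mul, hzs]
        push_cast
        field_simp
        ring
      · by_cases h2 : (j:ℕ) < n
        · obtain ⟨z, hz⟩ := hlint ⟨(j:ℕ), by omega⟩ (by simpa using h2)
          refine ⟨z, ?_⟩
          rw [hvm]
          rw [Finset.sum_congr rfl fun r (_ : r ∈ univ) => by
            rw [hentry r j, dif_neg h1, if_pos h2]]
          have hw : ∑ r, ν r * ((lap (whisker G) r j : ℤ) : ℚ)
              = (∑ r : Fin (n+1), ν ⟨r.val, by omega⟩ * ((lap G r ⟨(j:ℕ), by omega⟩ : ℤ) : ℚ))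
                + ν ⟨(j:ℕ), by omega⟩ - ν ⟨(n+1) + (j:ℕ), by omega⟩ :=
            wsum_a G ν ⟨(j:ℕ), by omega⟩
          rw [hw]
          have hj' : (⟨(j:ℕ), by omega⟩ : Fin (n+1)).val = (j:ℕ) := rfl
          rw [Finset.sum_congr rfl fun r (_ : r ∈ univ) => by rw [hnu1 r]]
          rw [hnu1 ⟨(j:ℕ), by omega⟩, hnu2 ⟨(j:ℕ), by omega⟩]
          have hcs : (∑ r : Fin (n+1), ((lap G r ⟨(j:ℕ), by omega⟩ : ℤ):ℚ)) = 0 := by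
            exact_mod_cast congrArg (fun z : ℤ => (z:ℚ)) (lap_colsum G ⟨(j:ℕ), by omega⟩)
          rw [Finset.sum_congr rfl fun r (_ : r ∈ univ) => add_mul (lam r)
            ((i:ℚ)/(2*((n:ℚ)+1))) (((lap G r ⟨(j:ℕ), by omega⟩ : ℤ):ℚ)),
            Finset.sum_add_distrib, hz, ← Finset.mul_sum, hcs, mul_zero, add_zero]
          ring
        · refine ⟨0, ?_⟩
          rw [hvm]
          rw [Finset.sum_congr rfl fun r (_ : r ∈ univ) => by
            rw [hentry r j, dif_neg h1, if_neg h2]]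
          have hcolEq : (⟨(j:ℕ)+1, by have := j.isLt; omega⟩ : Fin ((n+1)+(n+1)))
              = ⟨(n+1) + ((j:ℕ)+1 - (n+1)), by omega⟩ :=
            Fin.ext (by simp only [Fin.val_mk]; omega)
          rw [Finset.sum_congr rfl fun r (_ : r ∈ univ) => by rw [hcolEq]]
          have hw : ∑ r, ν r * ((lap (whisker G) r ⟨(n+1) + ((j:ℕ)+1 - (n+1)), by omega⟩ : ℤ) : ℚ)
              = ν ⟨(n+1) + ((j:ℕ)+1 - (n+1)), by omega⟩ - ν ⟨(j:ℕ)+1 - (n+1), by omega⟩ :=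
            wsum_b G ν ⟨(j:ℕ)+1 - (n+1), by omega⟩
          rw [hw]
          rw [hnu1 ⟨(j:ℕ)+1 - (n+1), by omega⟩, hnu2 ⟨(j:ℕ)+1 - (n+1), by omega⟩]
          simp
end

section
/- Let G := W*(K_n) with n ≥ 3, a graph on 2n+1 vertices, and let x ∈ ℤ^{2n+1}. Then x/(2n+1) ∈ Λ(P_G) if and only if: (1) 0 ≤ x_i ≤ 2n for all i ∈ {1,…,2n+1}; (2) x_{i+n} ≡ (n+1)x_i − Σ_{j=1}^n x_j (mod 2n+1) for each i ∈ {1,…,n}; and (3) x_{2n+1} ≡ 2x_{i+n} − x_i (mod 2n+1) for each i ∈ {1,…,n}. -/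
open Matrix Finset

/-- The graph `W*(K_n)` on `{1,…,2n+1}` (here `Fin (2n+1)`): the complete graph on the
first `n` vertices, whisker edges `{i, i+n}` for `i < n`, and a star vertex `2n` joined
to every whisker vertex. -/
def wstar (n : ℕ) : SimpleGraph (Fin (2 * n + 1)) :=
  SimpleGraph.fromRel fun u v =>
    ((u : ℕ) < n ∧ (v : ℕ) < n) ∨
    ((u : ℕ) < n ∧ (v : ℕ) = (u : ℕ) + n) ∨
    (n ≤ (u : ℕ) ∧ (u : ℕ) < 2 * n ∧ (v : ℕ) = 2 * n)


/-! ### Auxiliary lemmas -/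

open scoped Classical in
lemma lap_apply_ne' {m : ℕ} (G : SimpleGraph (Fin m)) {i j : Fin m} (h : i ≠ j) :
    lap G i j = if G.Adj i j then -1 else 0 := by
  simp only [lap, SimpleGraph.lapMatrix, SimpleGraph.degMatrix, SimpleGraph.adjMatrix,
    Matrix.sub_apply, Matrix.diagonal_apply_ne _ h, Matrix.of_apply]
  split_ifs <;> ring

open scoped Classical in
lemma lap_colsum_s11 {m : ℕ} (G : SimpleGraph (Fin m)) (x : Fin m → ℤ) (j : Fin m) :
    ∑ i, x i * lap G i j = ∑ i, (if G.Adj i j then x j - x i else 0) := by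
  have hsym : ∀ i, lap G i j = lap G j i := by
    intro i
    exact ((SimpleGraph.isSymm_lapMatrix G (R := ℤ)).apply i j).symm
  have h0 : ∑ i, lap G i j = 0 := by
    have := congrFun (SimpleGraph.lapMatrix_mulVec_const_eq_zero (R := ℤ) (G := G)) j
    simp only [Matrix.mulVec, dotProduct, mul_one, Pi.zero_apply] at this
    calc ∑ i, lap G i j = ∑ i, lap G j i := by simp_rw [hsym]
    _ = 0 := this
  have step : ∀ i, x i * lap G i j =
      (if G.Adj i j then x j - x i else 0) + x j * lap G i j := by
    intro i
    by_cases hij : i = j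
    · subst hij
      simp [SimpleGraph.irrefl]
    · rw [lap_apply_ne' G hij]
      split_ifs <;> ring
  rw [Finset.sum_congr rfl fun i _ => step i, Finset.sum_add_distrib, ← Finset.mul_sum, h0]
  ring

lemma wstar_adj (n : ℕ) (u v : Fin (2*n+1)) : (wstar n).Adj u v ↔
    (u:ℕ) ≠ (v:ℕ) ∧ (((u:ℕ) < n ∧ (v:ℕ) < n) ∨ ((u:ℕ) < n ∧ (v:ℕ) = (u:ℕ) + n) ∨
      ((v:ℕ) < n ∧ (u:ℕ) = (v:ℕ) + n) ∨ (n ≤ (u:ℕ) ∧ (u:ℕ) < 2*n ∧ (v:ℕ) = 2*n) ∨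
      (n ≤ (v:ℕ) ∧ (v:ℕ) < 2*n ∧ (u:ℕ) = 2*n)) := by
  simp only [wstar, SimpleGraph.fromRel_adj, ne_eq, Fin.ext_iff]
  constructor
  · rintro ⟨h, h2⟩; exact ⟨h, by tauto⟩
  · rintro ⟨h, h2⟩; exact ⟨h, by tauto⟩

lemma exists_int_div_iff (q a : ℤ) (hq : 0 < q) :
    (∃ z : ℤ, (a:ℚ)/(q:ℚ) = (z:ℚ)) ↔ q ∣ a := by
  have hq' : (q:ℚ) ≠ 0 := by exact_mod_cast hq.ne'
  constructor
  · rintro ⟨z, hz⟩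
    refine ⟨z, ?_⟩
    have h2 : (a:ℚ) = ((q * z : ℤ) : ℚ) := by push_cast; field_simp at hz; linarith
    exact_mod_cast h2
  · rintro ⟨c, rfl⟩
    exact ⟨c, by push_cast; field_simp⟩

lemma sumA (n : ℕ) (y : ℕ → ℤ) (jv : ℕ) (hj : jv < n) :
    ∑ i ∈ Finset.range (2*n+1), (if (i < n ∧ i ≠ jv) ∨ i = jv + n then y jv - y i else 0)
      = ((n:ℤ)+1) * y jv - (∑ i ∈ Finset.range n, y i) - y (jv+n) := by
  have split : ∀ i, (if (i < n ∧ i ≠ jv) ∨ i = jv + n then y jv - y i else 0)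
      = (if i < n ∧ i ≠ jv then y jv - y i else 0) + (if i = jv + n then y jv - y i else 0) := by
    intro i
    split_ifs <;> first | ring1 | omega
  rw [Finset.sum_congr rfl fun i _ => split i, Finset.sum_add_distrib,
    Finset.sum_ite_eq' (Finset.range (2*n+1)) (jv+n) (fun i => y jv - y i),
    if_pos (by simp only [Finset.mem_range]; omega)]
  have hsub : ∑ i ∈ Finset.range (2*n+1), (if i < n ∧ i ≠ jv then y jv - y i else 0)
      = ∑ i ∈ Finset.range n, (if i < n ∧ i ≠ jv then y jv - y i else 0) := by
    refine (Finset.sum_subset (Finset.range_subset_range.mpr (by omega)) ?_).symm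
    intro i _ hi
    simp only [Finset.mem_range, not_lt] at hi
    rw [if_neg (by omega)]
  rw [hsub]
  have split2 : ∀ i ∈ Finset.range n, (if i < n ∧ i ≠ jv then y jv - y i else 0)
      = (y jv - y i) - (if i = jv then y jv - y i else 0) := by
    intro i hi
    simp only [Finset.mem_range] at hi
    split_ifs <;> first | ring1 | omega
  rw [Finset.sum_congr rfl split2, Finset.sum_sub_distrib, Finset.sum_sub_distrib,
    Finset.sum_const, Finset.card_range,
    Finset.sum_ite_eq' (Finset.range n) jv (fun i => y jv - y i), if_pos (Finset.mem_range.mpr hj)]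
  push_cast
  ring

lemma sumB (n : ℕ) (y : ℕ → ℤ) (jv : ℕ) (h1 : n ≤ jv) (h2 : jv < 2*n) :
    ∑ i ∈ Finset.range (2*n+1), (if i = jv - n ∨ i = 2*n then y jv - y i else 0)
      = 2 * y jv - y (jv - n) - y (2*n) := by
  have split : ∀ i, (if i = jv - n ∨ i = 2*n then y jv - y i else 0)
      = (if i = jv - n then y jv - y i else 0) + (if i = 2*n then y jv - y i else 0) := by
    intro i
    split_ifs <;> first | ring1 | omega
  rw [Finset.sum_congr rfl fun i _ => split i, Finset.sum_add_distrib,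
    Finset.sum_ite_eq' (Finset.range (2*n+1)) (jv - n) (fun i => y jv - y i),
    Finset.sum_ite_eq' (Finset.range (2*n+1)) (2*n) (fun i => y jv - y i),
    if_pos (Finset.mem_range.mpr (by omega)), if_pos (Finset.mem_range.mpr (by omega))]
  ring

/-- For `G = W*(K_n)`, `n ≥ 3`, and `x ∈ ℤ^{2n+1}`:
`x/(2n+1) ∈ Λ(P_G)` iff (1) `0 ≤ xᵢ ≤ 2n` for all `i`; (2) for each `i < n`,
`x_{i+n} ≡ (n+1)xᵢ − Σ_{j<n} xⱼ (mod 2n+1)`; (3) for each `i < n`,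
`x_{2n} ≡ 2x_{i+n} − xᵢ (mod 2n+1)` (indices `0`-based, star vertex `2n`). -/
theorem mem_Lambda_wstar_iff (n : ℕ) (hn : 3 ≤ n) (x : Fin (2 * n + 1) → ℤ) :
    (fun i => (x i : ℚ) / (2 * (n : ℚ) + 1)) ∈ Lambda (lapAug (wstar n)) ↔
      ((∀ i, 0 ≤ x i ∧ x i ≤ 2 * n) ∧
       (∀ i : ℕ, ∀ hi : i < n,
         (2 * (n : ℤ) + 1) ∣
           (x ⟨i + n, by omega⟩ -
             (((n : ℤ) + 1) * x ⟨i, by omega⟩ -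
               ∑ j : Fin n, x ⟨(j : ℕ), by have := j.isLt; omega⟩))) ∧
       (∀ i : ℕ, ∀ hi : i < n,
         (2 * (n : ℤ) + 1) ∣
           (x ⟨2 * n, by omega⟩ - (2 * x ⟨i + n, by omega⟩ - x ⟨i, by omega⟩)))) := by
  classical
  have h01 : (0:ℚ) < 2*(n:ℚ)+1 := by positivity
  have hc0 : (2*(n:ℚ)+1) ≠ 0 := ne_of_gt h01
  set q : ℤ := 2*(n:ℤ)+1 with hq
  have hq0 : (0:ℤ) < q := by rw [hq]; positivity
  have hqQ : ((q : ℤ) : ℚ) = 2*(n:ℚ)+1 := by rw [hq]; push_cast; ring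
  set y : ℕ → ℤ := fun i => if h : i < 2*n+1 then x ⟨i,h⟩ else 0 with hydef
  have hxy : ∀ (i : ℕ) (h : i < 2*n+1), x ⟨i,h⟩ = y i := by
    intro i h
    simp only [hydef]
    rw [dif_pos h]
  have hxy' : ∀ i : Fin (2*n+1), x i = y (i:ℕ) := fun i => by rw [← hxy i i.isLt]
  -- column sums
  have hcolA : ∀ (i : ℕ) (hi : i < n) (h2 : i < 2*n+1),
      (∑ k, x k * lapAug (wstar n) k ⟨i, h2⟩)
        = ((n:ℤ)+1) * y i - (∑ t ∈ Finset.range n, y t) - y (i+n) := by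
    intro i hi h2
    have e1 : ∀ k : Fin (2*n+1),
        x k * lapAug (wstar n) k ⟨i, h2⟩ = x k * lap (wstar n) k ⟨i, h2⟩ := by
      intro k
      simp only [lapAug, Matrix.of_apply, Fin.val_mk]
      rw [if_neg (by omega)]
    rw [Finset.sum_congr rfl fun k _ => e1 k, lap_colsum_s11]
    have e2 : ∀ k : Fin (2*n+1), (if (wstar n).Adj k ⟨i, h2⟩ then x ⟨i,h2⟩ - x k else 0)
        = (fun t : ℕ => if (t < n ∧ t ≠ i) ∨ t = i + n then y i - y t else 0) ((k:ℕ)) := by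
      intro k
      simp only
      rw [hxy' k, hxy i h2]
      refine if_congr ?_ rfl rfl
      rw [wstar_adj]
      simp only [Fin.val_mk]
      omega
    rw [Finset.sum_congr rfl fun k _ => e2 k]
    exact (Fin.sum_univ_eq_sum_range _ _).trans (sumA n y i hi)
  have hcolB : ∀ (jv : ℕ) (ha : n ≤ jv) (hb : jv < 2*n) (h2 : jv < 2*n+1),
      (∑ k, x k * lapAug (wstar n) k ⟨jv, h2⟩) = 2 * y jv - y (jv - n) - y (2*n) := by
    intro jv ha hb h2
    have e1 : ∀ k : Fin (2*n+1),
        x k * lapAug (wstar n) k ⟨jv, h2⟩ = x k * lap (wstar n) k ⟨jv, h2⟩ := by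
      intro k
      simp only [lapAug, Matrix.of_apply, Fin.val_mk]
      rw [if_neg (by omega)]
    rw [Finset.sum_congr rfl fun k _ => e1 k, lap_colsum_s11]
    have e2 : ∀ k : Fin (2*n+1), (if (wstar n).Adj k ⟨jv, h2⟩ then x ⟨jv,h2⟩ - x k else 0)
        = (fun t : ℕ => if t = jv - n ∨ t = 2*n then y jv - y t else 0) ((k:ℕ)) := by
      intro k
      simp only
      rw [hxy' k, hxy jv h2]
      refine if_congr ?_ rfl rfl
      rw [wstar_adj]
      simp only [Fin.val_mk]
      omega
    rw [Finset.sum_congr rfl fun k _ => e2 k]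
    exact (Fin.sum_univ_eq_sum_range _ _).trans (sumB n y jv ha hb)
  have hcolC : ∀ (jv : ℕ) (he : jv = 2*n) (h2 : jv < 2*n+1),
      (∑ k, x k * lapAug (wstar n) k ⟨jv, h2⟩) = ∑ t ∈ Finset.range (2*n+1), y t := by
    intro jv he h2
    have e1 : ∀ k : Fin (2*n+1),
        x k * lapAug (wstar n) k ⟨jv, h2⟩ = (fun t : ℕ => y t) ((k:ℕ)) := by
      intro k
      simp only [lapAug, Matrix.of_apply, Fin.val_mk]
      rw [if_pos (by omega), mul_one, hxy' k]
    rw [Finset.sum_congr rfl fun k _ => e1 k]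
    exact Fin.sum_univ_eq_sum_range _ _
  have hcol' := hxy'
  simp only [hxy'] at hcolA hcolB hcolC
  -- membership characterization
  have hvec : ∀ j : Fin (2*n+1),
      Matrix.vecMul (fun i => (x i:ℚ)/(2*(n:ℚ)+1))
          ((lapAug (wstar n)).map (fun a : ℤ => (a:ℚ))) j
        = ((∑ i, x i * lapAug (wstar n) i j : ℤ) : ℚ) / (2*(n:ℚ)+1) := by
    intro j
    simp only [Matrix.vecMul, dotProduct, Matrix.map_apply]
    rw [eq_div_iff hc0, Finset.sum_mul]
    push_cast
    refine Finset.sum_congr rfl fun i _ => ?_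
    field_simp
  have hmem : (fun i => (x i : ℚ) / (2 * (n : ℚ) + 1)) ∈ Lambda (lapAug (wstar n)) ↔
      ((∀ i, 0 ≤ x i ∧ x i ≤ 2*(n:ℤ)) ∧
        ∀ j : Fin (2*n+1), q ∣ ∑ i, x i * lapAug (wstar n) i j) := by
    simp only [Lambda, Set.mem_setOf_eq]
    refine and_congr (forall_congr' fun i => ?_) (forall_congr' fun j => ?_)
    · constructor
      · rintro ⟨a, b⟩
        rw [div_lt_one h01] at b
        have a2 : (0:ℚ) ≤ (x i:ℚ) := by
          have h3 := mul_nonneg a (le_of_lt h01)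
          rwa [div_mul_cancel₀ _ hc0] at h3
        constructor
        · exact_mod_cast a2
        · have h4 : (x i:ℚ) < ((2*(n:ℤ)+1 : ℤ):ℚ) := by push_cast; linarith
          have h5 : x i < 2*(n:ℤ)+1 := by exact_mod_cast h4
          omega
      · rintro ⟨a, b⟩
        have a' : (0:ℚ) ≤ (x i:ℚ) := by exact_mod_cast a
        have b' : (x i:ℚ) ≤ 2*(n:ℚ) := by exact_mod_cast b
        exact ⟨div_nonneg a' (le_of_lt h01), by rw [div_lt_one h01]; linarith⟩
    · rw [hvec j, ← hqQ]
      exact exists_int_div_iff q _ hq0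
  rw [hmem]
  simp only [hxy, Fin.sum_univ_eq_sum_range]
  constructor
  · rintro ⟨hB, hcols⟩
    refine ⟨hB, ?_, ?_⟩
    · intro i hi
      have hP : i < 2*n+1 := by omega
      have h4 := hcols ⟨i, hP⟩
      rw [hcolA i hi hP] at h4
      have e : y (i+n) - (((n:ℤ)+1)*y i - ∑ t ∈ Finset.range n, y t)
          = -(((n:ℤ)+1)*y i - (∑ t ∈ Finset.range n, y t) - y (i+n)) := by ring
      rw [e, dvd_neg]
      exact h4
    · intro i hi
      have hP : i + n < 2*n+1 := by omega
      have h4 := hcols ⟨i+n, hP⟩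
      rw [hcolB (i+n) (by omega) (by omega) hP, Nat.add_sub_cancel] at h4
      have e : y (2*n) - (2*y (i+n) - y i) = -(2*y (i+n) - y i - y (2*n)) := by ring
      rw [e, dvd_neg]
      exact h4
  · rintro ⟨hB, hC2, hC3⟩
    refine ⟨hB, ?_⟩
    intro j
    by_cases hj1 : (j:ℕ) < n
    · rw [show (∑ k : Fin (2*n+1), y (k:ℕ) * lapAug (wstar n) k j)
          = ((n:ℤ)+1) * y (j:ℕ) - (∑ t ∈ Finset.range n, y t) - y ((j:ℕ)+n)
          from hcolA (j:ℕ) hj1 j.isLt]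
      have h5 := hC2 (j:ℕ) hj1
      have e : ((n:ℤ)+1) * y (j:ℕ) - (∑ t ∈ Finset.range n, y t) - y ((j:ℕ)+n)
          = -(y ((j:ℕ)+n) - (((n:ℤ)+1)*y (j:ℕ) - ∑ t ∈ Finset.range n, y t)) := by ring
      rw [e, dvd_neg]
      exact h5
    · by_cases hj2 : (j:ℕ) < 2*n
      · rw [show (∑ k : Fin (2*n+1), y (k:ℕ) * lapAug (wstar n) k j)
            = 2 * y (j:ℕ) - y ((j:ℕ) - n) - y (2*n)
            from hcolB (j:ℕ) (by omega) hj2 j.isLt]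
        have h5 := hC3 ((j:ℕ) - n) (by omega)
        rw [show (j:ℕ) - n + n = (j:ℕ) from by omega] at h5
        have e : 2 * y (j:ℕ) - y ((j:ℕ) - n) - y (2*n)
            = -(y (2*n) - (2*y (j:ℕ) - y ((j:ℕ) - n))) := by ring
        rw [e, dvd_neg]
        exact h5
      · rw [show (∑ k : Fin (2*n+1), y (k:ℕ) * lapAug (wstar n) k j)
            = ∑ t ∈ Finset.range (2*n+1), y t
            from hcolC (j:ℕ) (by omega) j.isLt]
        have hT : (∑ t ∈ Finset.range (2*n+1), y t)
            = (∑ t ∈ Finset.range n, y t) + (∑ t ∈ Finset.range n, y (t+n)) + y (2*n) := by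
          rw [show 2*n+1 = (n+n)+1 from by ring, Finset.sum_range_succ, Finset.sum_range_add,
            show n+n = 2*n from by ring,
            Finset.sum_congr rfl fun t _ => (show y (n+t) = y (t+n) from by rw [Nat.add_comm])]
        have hWS : q ∣ (∑ t ∈ Finset.range n, y (t+n)) - (∑ t ∈ Finset.range n, y t) := by
          have e2 : (∑ t ∈ Finset.range n,
                (y (t+n) - (((n:ℤ)+1)*y t - ∑ s ∈ Finset.range n, y s)))
              = (∑ t ∈ Finset.range n, y (t+n)) - (∑ t ∈ Finset.range n, y t) := by
            rw [Finset.sum_sub_distrib, Finset.sum_sub_distrib, ← Finset.mul_sum,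
              Finset.sum_const, Finset.card_range, nsmul_eq_mul]
            ring
          rw [← e2]
          exact Finset.dvd_sum fun t ht => hC2 t (Finset.mem_range.mp ht)
        have h20 := hC2 0 (by omega)
        have h30 := hC3 0 (by omega)
        rw [hT]
        have big : (∑ t ∈ Finset.range n, y t) + (∑ t ∈ Finset.range n, y (t+n)) + y (2*n)
            = ((∑ t ∈ Finset.range n, y (t+n)) - (∑ t ∈ Finset.range n, y t))
              + (y (2*n) - (2*y (0+n) - y 0))
              + 2*(y (0+n) - (((n:ℤ)+1)*y 0 - ∑ t ∈ Finset.range n, y t))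
              + q * y 0 := by rw [hq]; ring
        rw [big]
        exact dvd_add (dvd_add (dvd_add hWS h30) (Dvd.dvd.mul_left h20 2))
          (Dvd.dvd.mul_right dvd_rfl (y 0))
end
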